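/- Let A = (Q, Σ, Δ, q0, F) be a complete NFA with finite state set Q. Suppose there exist states q, q' ∈ Q and strings s0, s, s1 ∈ Σ* such that: (i) there is a run of A from q0 to q labeled by s0, (ii) there exist a run π1 from q to q labeled by s, a run π2 from q to q' labeled by s with π1 ≠ π2, and a run π3 from q' to q' labeled by s, and (iii) no run of A from q' labeled by s1 ends in an accepting state. Then for every natural number k ≥ 1 there exists a non-accepting state q_r ∈ Q \ F such that the number of distinct runs of A from q0 to q_r labeled by s0·s^k·s1 is at least k / |Q|. -/

import Mathlib

/-- A nondeterministic finite automaton `A = (Q, Σ, Δ, q0, F)` with state type `Q`,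
alphabet `A`, transition function `δ`, initial state `q0` and accepting states `F`. -/
structure NFA' (Q A : Type*) where
  δ : Q → A → Set Q
  q0 : Q
  F : Set Q

namespace NFA'

variable {Q A : Type*}

/-- `ρ` is a run of the automaton labeled by the word `w`: the state sequence
`ρ 0, ρ 1, …, ρ |w|` follows transitions of `M` along the letters of `w`. -/
def IsRunOn (M : NFA' Q A) (w : List A) (ρ : Fin (w.length + 1) → Q) : Prop :=
  ∀ i : Fin w.length, ρ i.succ ∈ M.δ (ρ i.castSucc) (w.get i)

/-- The set of runs of `M` from `p` to `r` labeled by the word `w`,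
represented by their state sequences. -/
def Runs (M : NFA' Q A) (p r : Q) (w : List A) : Set (Fin (w.length + 1) → Q) :=
  {ρ | ρ 0 = p ∧ ρ (Fin.last w.length) = r ∧ M.IsRunOn w ρ}

end NFA'

/-- `wordPow s k` is the `k`-fold concatenation `s^k` of the word `s`. -/
def wordPow {A : Type*} (s : List A) : ℕ → List A
  | 0 => []
  | k + 1 => s ++ wordPow s k

/-!
Let `π₁, π₂, π₃` be the three runs on `s` and `τ` a run from `q'` on `s₁`; by completeness `τ`
exists, and by the hypothesis on `s₁` it ends in a non-accepting state `r`. The `k` runs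
`π₁^j π₂ π₃^(k-1-j)` (`j < k`) from `q` to `q'` on `s^k` are pairwise distinct, since two of them
first differ in the block where the one with the smaller `j` leaves `π₁`. Prefixing a fixed run on
`s₀` and appending `τ` keeps them distinct, so already `r` carries `k ≥ k / |Q|` runs.
-/

namespace NFA'

variable {Q A : Type*} {M : NFA' Q A}

/-- The state sequence of `ρ` followed by that of `σ` without its first state, which for
composable runs is the last state of `ρ`. -/
def runAppend (u v : List A) (ρ : Fin (u.length + 1) → Q) (σ : Fin (v.length + 1) → Q) :
    Fin ((u ++ v).length + 1) → Q := fun i =>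
  if h : (i : ℕ) ≤ u.length then ρ ⟨i, by omega⟩
  else σ ⟨i - u.length, by have := i.isLt; simp only [List.length_append] at this; omega⟩

section runAppend

variable {u v : List A} {ρ ρ' : Fin (u.length + 1) → Q} {σ σ' : Fin (v.length + 1) → Q}

theorem runAppend_apply_of_le {i : Fin ((u ++ v).length + 1)} (hi : (i : ℕ) ≤ u.length) :
    runAppend u v ρ σ i = ρ ⟨i, by omega⟩ :=
  dif_pos hi

theorem runAppend_apply_of_ge (hσ : σ 0 = ρ (Fin.last _)) {i : Fin ((u ++ v).length + 1)}
    (hi : u.length ≤ i) :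
    runAppend u v ρ σ i =
      σ ⟨i - u.length, by have := i.isLt; simp only [List.length_append] at this; omega⟩ := by
  unfold runAppend
  split_ifs with h
  · rw [show σ ⟨i - u.length, _⟩ = σ 0 from congrArg σ (Fin.ext (by simp; omega)), hσ]
    exact congrArg ρ (Fin.ext (by simp; omega))
  · rfl

theorem runAppend_left_injective (h : runAppend u v ρ σ = runAppend u v ρ' σ') : ρ = ρ' := by
  funext i
  have hi : (i : ℕ) < (u ++ v).length + 1 := by simp only [List.length_append]; omega
  have hiu : (i : ℕ) ≤ u.length := Nat.le_of_lt_succ i.isLt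
  simpa only [runAppend_apply_of_le (v := v) (i := ⟨i, hi⟩) hiu] using congrFun h ⟨i, hi⟩

theorem runAppend_right_injective (h₀ : σ 0 = σ' 0)
    (h : runAppend u v ρ σ = runAppend u v ρ σ') : σ = σ' := by
  funext j
  rcases Nat.eq_zero_or_pos j with hj | hj
  · rwa [show j = 0 from Fin.ext hj]
  have hi : u.length + j < (u ++ v).length + 1 := by
    have := j.isLt; simp only [List.length_append]; omega
  have hiu : ¬ u.length + (j : ℕ) ≤ u.length := by omega
  simpa only [runAppend, hiu, dite_false, Nat.add_sub_cancel_left] using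
    congrFun h ⟨u.length + j, hi⟩

variable {p m r : Q}

theorem runAppend_mem_runs (hρ : ρ ∈ M.Runs p m u) (hσ : σ ∈ M.Runs m r v) :
    runAppend u v ρ σ ∈ M.Runs p r (u ++ v) := by
  obtain ⟨hρ₀, hρ₁, hρrun⟩ := hρ
  obtain ⟨hσ₀, hσ₁, hσrun⟩ := hσ
  have hσρ : σ 0 = ρ (Fin.last _) := hσ₀.trans hρ₁.symm
  refine ⟨(runAppend_apply_of_le (Nat.zero_le _)).trans hρ₀, ?_, fun i => ?_⟩
  · rw [runAppend_apply_of_ge hσρ (by simp), ← hσ₁]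
    exact congrArg σ (Fin.ext (by simp))
  have hi := i.isLt
  simp only [List.length_append] at hi
  rcases Nat.lt_or_ge i u.length with hiu | hiu
  · rw [runAppend_apply_of_le (i := i.succ) hiu, runAppend_apply_of_le (Nat.le_of_lt hiu),
      List.get_eq_getElem, List.getElem_append_left hiu]
    exact hρrun ⟨i, hiu⟩
  · rw [runAppend_apply_of_ge hσρ hiu,
      runAppend_apply_of_ge hσρ (i := i.succ) (Nat.le_succ_of_le hiu), List.get_eq_getElem,
      List.getElem_append_right hiu]
    convert hσrun ⟨i - u.length, by omega⟩ using 3 <;> try rfl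
    simp only [Fin.val_succ]
    omega

theorem runAppend_injOn_runs : Set.InjOn (runAppend u v ρ) (M.Runs m r v) :=
  fun _ hσ _ hσ' h => runAppend_right_injective (hσ.1.trans hσ'.1.symm) h

theorem encard_runs_le_encard_runs_append_left (hρ : ρ ∈ M.Runs p m u) :
    (M.Runs m r v).encard ≤ (M.Runs p r (u ++ v)).encard :=
  Set.encard_le_encard_of_injOn (fun _ hσ => runAppend_mem_runs hρ hσ) runAppend_injOn_runs

theorem encard_runs_le_encard_runs_append_right (hσ : σ ∈ M.Runs m r v) :
    (M.Runs p m u).encard ≤ (M.Runs p r (u ++ v)).encard :=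
  Set.encard_le_encard_of_injOn (fun _ hρ => runAppend_mem_runs hρ hσ)
    fun _ _ _ _ h => runAppend_left_injective h

end runAppend

theorem const_mem_runs_nil (p : Q) : (fun _ => p) ∈ M.Runs p p [] :=
  ⟨rfl, rfl, fun i => i.elim0⟩

theorem runs_wordPow_nonempty {p : Q} {s : List A} (h : (M.Runs p p s).Nonempty) (k : ℕ) :
    (M.Runs p p (wordPow s k)).Nonempty := by
  induction k with
  | zero => exact ⟨_, const_mem_runs_nil p⟩
  | succ k ih =>
    obtain ⟨π, hπ⟩ := h
    obtain ⟨τ, hτ⟩ := ih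
    exact ⟨_, runAppend_mem_runs hπ hτ⟩

theorem exists_runs_nonempty_of_complete (hM : ∀ p a, (M.δ p a).Nonempty) (p : Q) (w : List A) :
    ∃ r, (M.Runs p r w).Nonempty := by
  induction w generalizing p with
  | nil => exact ⟨p, _, const_mem_runs_nil p⟩
  | cons a w ih =>
    obtain ⟨b, hb⟩ := hM p a
    obtain ⟨r, τ, hτ⟩ := ih b
    have hstep : ![p, b] ∈ M.Runs p b [a] := ⟨rfl, rfl, fun i => by fin_cases i; exact hb⟩
    exact ⟨r, _, runAppend_mem_runs hstep hτ⟩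

theorem le_encard_runs_wordPow {q q' : Q} {s : List A} {π₁ π₂ : Fin (s.length + 1) → Q}
    (h₁ : π₁ ∈ M.Runs q q s) (h₂ : π₂ ∈ M.Runs q q' s) (hne : π₁ ≠ π₂)
    (h₃ : (M.Runs q' q' s).Nonempty) (k : ℕ) :
    (k : ℕ∞) ≤ (M.Runs q q' (wordPow s k)).encard := by
  induction k with
  | zero => simp
  | succ k ih =>
    obtain ⟨τ, hτ⟩ := runs_wordPow_nonempty h₃ k
    set S := runAppend s (wordPow s k) π₁ '' M.Runs q q' (wordPow s k)
    have hnew : runAppend s (wordPow s k) π₂ τ ∉ S := by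
      rintro ⟨σ, -, hσ⟩
      exact hne (runAppend_left_injective hσ)
    calc ((k + 1 : ℕ) : ℕ∞) ≤ S.encard + 1 := by
          rw [runAppend_injOn_runs.encard_image]; push_cast; gcongr
      _ = (insert (runAppend s (wordPow s k) π₂ τ) S).encard :=
          (Set.encard_insert_of_notMem hnew).symm
      _ ≤ (M.Runs q q' (s ++ wordPow s k)).encard := Set.encard_le_encard <|
          Set.insert_subset (runAppend_mem_runs h₂ hτ)
            (Set.image_subset_iff.2 fun _ hσ => runAppend_mem_runs h₁ hσ)

end NFA'

/-- For a complete NFA with finitely many states: if `q` is reachable from `q0` via `s0`,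
there are a loop `π₁` at `q`, a run `π₂` from `q` to `q'` with `π₁ ≠ π₂`, and a loop `π₃`
at `q'`, all labeled by `s`, and no run from `q'` labeled `s1` ends in an accepting state,
then for every `k ≥ 1` some non-accepting state `q_r` admits at least `k / |Q|` distinct
runs from `q0` labeled `s0 · s^k · s1`. -/
theorem vulnerable_superlinear_runs_of_complete {Q A : Type*} [Fintype Q]
    (M : NFA' Q A) (hcomplete : ∀ (p : Q) (a : A), (M.δ p a).Nonempty)
    (q q' : Q) (s₀ s s₁ : List A)
    (hpre : (M.Runs M.q0 q s₀).Nonempty)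
    (hcore : ∃ π₁ π₂ π₃, π₁ ∈ M.Runs q q s ∧ π₂ ∈ M.Runs q q' s ∧ π₁ ≠ π₂ ∧
      π₃ ∈ M.Runs q' q' s)
    (hsuf : ∀ r : Q, r ∈ M.F → M.Runs q' r s₁ = ∅) :
    ∀ k : ℕ, 1 ≤ k → ∃ qr : Q, qr ∉ M.F ∧
      ((k / Fintype.card Q : ℕ) : ℕ∞) ≤
        (M.Runs M.q0 qr (s₀ ++ wordPow s k ++ s₁)).encard := by
  intro k _
  obtain ⟨π₁, π₂, π₃, h₁, h₂, hne, h₃⟩ := hcore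
  obtain ⟨ρ, hρ⟩ := hpre
  obtain ⟨r, σ, hσ⟩ := NFA'.exists_runs_nonempty_of_complete hcomplete q' s₁
  refine ⟨r, fun hr => by simp [hsuf r hr] at hσ, ?_⟩
  calc ((k / Fintype.card Q : ℕ) : ℕ∞) ≤ k := Nat.cast_le.2 (Nat.div_le_self _ _)
    _ ≤ (M.Runs q q' (wordPow s k)).encard := NFA'.le_encard_runs_wordPow h₁ h₂ hne ⟨π₃, h₃⟩ k
    _ ≤ (M.Runs M.q0 q' (s₀ ++ wordPow s k)).encard :=
      NFA'.encard_runs_le_encard_runs_append_left hρ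
    _ ≤ _ := NFA'.encard_runs_le_encard_runs_append_right hσ
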